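/- arXiv:2101.10748 — 3 statements merged into one kernel-verified Lean document; each statement's English description precedes it below -/
import Mathlib

section
/- Uniform upper bound on the right Perron eigenvector: under (HP1)–(HP3), for every ε > 0 there exists N such that for all n ≥ N and all y ∈ X_n ∖ {x_n}, γ_n(y) ≤ 1 + ε. -/
/-!
Write `A = ([P]_x)^T`, `B = P^T`, `ℓ = λ^T`, `S = π ⬝ᵥ γ` and `M = max γ`. Mixing makes every row
of `B` equal to `π` up to a factor `1 ± σ`, and `0 ≤ A ≤ B`. Started from `π`, the killed chain
loses at most `2Tπ(x) ≤ 2σ` of its mass in `T` steps. Hence `ℓM ≤ (1 + σ)S` (evaluate `Aγ = ℓγ`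
at a maximiser of `γ`), `(1 - ℓ)S ≤ 2σM` (pair the lost mass `π - πA` with `γ`), and
`(1 - σ)S ≤ ℓ + (1 - ℓ)M` (pair `μB = μA + μ(B - A)` with `γ`, using `μ ⬝ᵥ γ = 1`). A
Collatz–Wielandt argument, with `π` restricted to the states that lose little mass as test vector,
gives `ℓ ≥ 1/2`, which rules out the second root of these inequalities; they then force
`M ≤ 1 + 20σ`.
-/

open Finset Filter

/-- The kernel of the chain killed at `x`: all entries from or to `x` are set to zero.
For `y, z ≠ x` the powers of `killed P x` agree with the powers of the principal
submatrix `[P]_x` of `P` obtained by deleting the row and the column indexed by `x`. -/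
def killed {n : ℕ} (P : Matrix (Fin n) (Fin n) ℝ) (x : Fin n) :
    Matrix (Fin n) (Fin n) ℝ :=
  Matrix.of fun y z => if y = x ∨ z = x then 0 else P y z

/-- The no-hit probability `ℙ_α(τ_x > t) = Σ_{y ≠ x} Σ_{z ≠ x} α(y)·([P]_x)^t(y,z)`. -/
def noHit {n : ℕ} (P : Matrix (Fin n) (Fin n) ℝ) (x : Fin n)
    (a : Fin n → ℝ) (t : ℕ) : ℝ :=
  ∑ y ∈ Finset.univ.erase x, ∑ z ∈ Finset.univ.erase x, a y * ((killed P x) ^ t) y z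

/-- The expected number of returns to `x` within time `T`:
`R_T(x) = Σ_{t=0}^{T} P^t(x,x)`. -/
def returns {n : ℕ} (P : Matrix (Fin n) (Fin n) ℝ) (x : Fin n) (T : ℕ) : ℝ :=
  ∑ t ∈ Finset.range (T + 1), (P ^ t) x x

namespace Matrix

variable {ι R : Type*} [Fintype ι]

section OrderedSemiring

variable [Semiring R] [PartialOrder R] [IsOrderedRing R]

theorem pow_apply_le_pow_apply [DecidableEq ι] {A B : Matrix ι ι R} (hA : ∀ i j, 0 ≤ A i j)
    (hAB : ∀ i j, A i j ≤ B i j) (t : ℕ) (i j : ι) : (A ^ t) i j ≤ (B ^ t) i j := by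
  induction t generalizing j with
  | zero => rfl
  | succ t ih =>
    rw [pow_succ, pow_succ, mul_apply, mul_apply]
    exact Finset.sum_le_sum fun k _ => mul_le_mul (ih k) (hAB k j) (hA k j)
      (pow_apply_nonneg (fun i j => (hA i j).trans (hAB i j)) t i k)

theorem vecMul_nonneg {A : Matrix ι ι R} (hA : ∀ i j, 0 ≤ A i j) {v : ι → R} (hv : 0 ≤ v) :
    0 ≤ v ᵥ* A :=
  fun j => dotProduct_nonneg_of_nonneg hv fun i => hA i j

theorem vecMul_mono_left {A : Matrix ι ι R} (hA : ∀ i j, 0 ≤ A i j) {u v : ι → R}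
    (huv : u ≤ v) : u ᵥ* A ≤ v ᵥ* A :=
  fun j => dotProduct_le_dotProduct_of_nonneg_right huv fun i => hA i j

theorem vecMul_mono_right {A B : Matrix ι ι R} (hAB : ∀ i j, A i j ≤ B i j) {v : ι → R}
    (hv : 0 ≤ v) : v ᵥ* A ≤ v ᵥ* B :=
  fun j => dotProduct_le_dotProduct_of_nonneg_left (fun i => hAB i j) hv

end OrderedSemiring

section CommSemiring

variable [CommSemiring R] [DecidableEq ι]

theorem pow_mulVec_eq_pow_smul {A : Matrix ι ι R} {v : ι → R} {c : R}
    (h : A *ᵥ v = c • v) (t : ℕ) : A ^ t *ᵥ v = c ^ t • v := by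
  induction t with
  | zero => simp
  | succ t ih => rw [pow_succ', ← mulVec_mulVec, ih, mulVec_smul, h, smul_smul, pow_succ]

theorem vecMul_pow_eq_pow_smul {A : Matrix ι ι R} {v : ι → R} {c : R}
    (h : v ᵥ* A = c • v) (t : ℕ) : v ᵥ* A ^ t = c ^ t • v := by
  induction t with
  | zero => simp
  | succ t ih => rw [pow_succ, ← vecMul_vecMul, ih, smul_vecMul, h, smul_smul, pow_succ]

end CommSemiring

theorem sub_nsmul_le_dotProduct_pow_mulVec_one [DecidableEq ι] [CommRing R] [PartialOrder R]
    [IsOrderedRing R] {K : Matrix ι ι R} {v r : ι → R} (hK : ∀ i j, 0 ≤ K i j) (hv : 0 ≤ v)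
    (hvK : v ᵥ* K ≤ v) (hr : 0 ≤ r) (hloss : 1 - K *ᵥ 1 ≤ r) (t : ℕ) :
    v ⬝ᵥ 1 - t • (v ⬝ᵥ r) ≤ v ⬝ᵥ (K ^ t *ᵥ 1) := by
  have hsub : ∀ t : ℕ, v ᵥ* K ^ t ≤ v := by
    intro t
    induction t with
    | zero => simp
    | succ t ih =>
      rw [pow_succ, ← vecMul_vecMul]
      exact (vecMul_mono_left hK ih).trans hvK
  induction t with
  | zero => simp
  | succ t ih =>
    have hstep : v ⬝ᵥ (K ^ t *ᵥ 1) - v ⬝ᵥ r ≤ v ⬝ᵥ (K ^ (t + 1) *ᵥ 1) := by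
      rw [pow_succ, ← mulVec_mulVec, dotProduct_mulVec v (K ^ t), dotProduct_mulVec v (K ^ t)]
      calc v ᵥ* K ^ t ⬝ᵥ 1 - v ⬝ᵥ r ≤ v ᵥ* K ^ t ⬝ᵥ 1 - v ᵥ* K ^ t ⬝ᵥ r :=
            sub_le_sub_left (dotProduct_le_dotProduct_of_nonneg_right (hsub t) hr) _
        _ = v ᵥ* K ^ t ⬝ᵥ (1 - r) := by rw [dotProduct_sub]
        _ ≤ v ᵥ* K ^ t ⬝ᵥ (K *ᵥ 1) :=
            dotProduct_le_dotProduct_of_nonneg_left (sub_le_comm.mp hloss)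
              (vecMul_nonneg (pow_apply_nonneg hK t) hv)
    calc v ⬝ᵥ 1 - (t + 1) • (v ⬝ᵥ r) = v ⬝ᵥ 1 - t • (v ⬝ᵥ r) - v ⬝ᵥ r := by
          rw [succ_nsmul, sub_add_eq_sub_sub]
      _ ≤ v ⬝ᵥ (K ^ t *ᵥ 1) - v ⬝ᵥ r := sub_le_sub_right ih _
      _ ≤ v ⬝ᵥ (K ^ (t + 1) *ᵥ 1) := hstep

end Matrix

theorem le_one_add_of_perron_bounds {ℓ σ S M : ℝ} (hσ0 : 0 < σ) (hσ : σ ≤ 1 / 100) (hS : 0 < S)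
    (hM : 0 ≤ M) (hℓ : 1 / 2 ≤ ℓ) (h₁ : ℓ * M ≤ (1 + σ) * S) (h₂ : (1 - ℓ) * S ≤ 2 * σ * M)
    (h₃ : (1 - σ) * S ≤ ℓ + (1 - ℓ) * M) : M ≤ 1 + 20 * σ := by
  have hMS : M ≤ 2 * (1 + σ) * S := by nlinarith
  have hℓ' : 1 - ℓ ≤ 5 * σ := by
    refine le_of_mul_le_mul_right ?_ hS
    nlinarith [mul_le_mul_of_nonneg_left hMS (by positivity : (0 : ℝ) ≤ 2 * σ), mul_pos hσ0 hS]
  nlinarith [mul_le_mul_of_nonneg_right hℓ' hM]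

section PerronVector

open Matrix

variable {ι : Type*} {A B : Matrix ι ι ℝ} {π μ γ v w : ι → ℝ} {ℓ σ M : ℝ}

noncomputable def lowLossPart (π d : ι → ℝ) : ι → ℝ := fun i => if 4 * d i ≤ π i then π i else 0

theorem lowLossPart_nonneg {d : ι → ℝ} (hπ : 0 ≤ π) : 0 ≤ lowLossPart π d := fun i => by
  unfold lowLossPart; split_ifs
  · exact hπ i
  · exact le_rfl

theorem lowLossPart_le {d : ι → ℝ} (hπ : 0 ≤ π) : lowLossPart π d ≤ π := fun i => by
  unfold lowLossPart; split_ifs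
  · exact le_rfl
  · exact hπ i

variable [Fintype ι]

theorem dotProduct_le_sum_mul (hw : 0 ≤ w) (hv : ∀ i, v i ≤ M) :
    w ⬝ᵥ v ≤ (∑ i, w i) * M :=
  calc w ⬝ᵥ v ≤ w ⬝ᵥ fun _ => M := dotProduct_le_dotProduct_of_nonneg_left hv hw
    _ = (∑ i, w i) * M := by simp only [dotProduct, Finset.sum_mul]

theorem sum_mul_le_dotProduct (hw : 0 ≤ w) (hv : ∀ i, M ≤ v i) :
    (∑ i, w i) * M ≤ w ⬝ᵥ v :=
  calc (∑ i, w i) * M = w ⬝ᵥ fun _ => M := by simp only [dotProduct, Finset.sum_mul]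
    _ ≤ w ⬝ᵥ v := dotProduct_le_dotProduct_of_nonneg_left hv hw

theorem dotProduct_pos_of_apply_lt_sum {x : ι} (hv : 0 ≤ v) (hγ : 0 ≤ γ)
    (hγpos : ∀ i, i ≠ x → 0 < γ i) (hvx : v x < ∑ i, v i) : 0 < v ⬝ᵥ γ := by
  classical
  rw [← Finset.sum_erase_add _ _ (Finset.mem_univ x), lt_add_iff_pos_left] at hvx
  obtain ⟨i, hi, hvi⟩ : ∃ i ∈ Finset.univ.erase x, 0 < v i := by
    by_contra! h
    exact hvx.not_ge (Finset.sum_nonpos h)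
  exact Finset.sum_pos' (fun j _ => mul_nonneg (hv j) (hγ j))
    ⟨i, Finset.mem_univ i, mul_pos hvi (hγpos i (Finset.ne_of_mem_erase hi))⟩

theorem le_of_smul_le_vecMul {c : ℝ} (hγ : 0 ≤ γ) (hγA : A *ᵥ γ = ℓ • γ)
    (hv : c • v ≤ v ᵥ* A) (hvγ : 0 < v ⬝ᵥ γ) : c ≤ ℓ := by
  refine le_of_mul_le_mul_right ?_ hvγ
  calc c * (v ⬝ᵥ γ) = c • v ⬝ᵥ γ := (smul_dotProduct c v γ).symm
    _ ≤ v ᵥ* A ⬝ᵥ γ := dotProduct_le_dotProduct_of_nonneg_right hv hγ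
    _ = ℓ * (v ⬝ᵥ γ) := by rw [← dotProduct_mulVec, hγA, dotProduct_smul, smul_eq_mul]

theorem eigenvalue_mul_apply_le (hγ : 0 ≤ γ) (hγA : A *ᵥ γ = ℓ • γ)
    (hAπ : ∀ i j, A i j ≤ (1 + σ) * π j) (y : ι) : ℓ * γ y ≤ (1 + σ) * (π ⬝ᵥ γ) :=
  calc ℓ * γ y = (A *ᵥ γ) y := by rw [hγA, Pi.smul_apply, smul_eq_mul]
    _ ≤ (1 + σ) • π ⬝ᵥ γ := dotProduct_le_dotProduct_of_nonneg_right (hAπ y) hγ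
    _ = (1 + σ) * (π ⬝ᵥ γ) := smul_dotProduct _ _ _

theorem one_sub_eigenvalue_mul_le (hπA : π ᵥ* A ≤ π) (hγA : A *ᵥ γ = ℓ • γ)
    (hM : ∀ i, γ i ≤ M) : (1 - ℓ) * (π ⬝ᵥ γ) ≤ (∑ i, (π - π ᵥ* A) i) * M :=
  calc (1 - ℓ) * (π ⬝ᵥ γ) = (π - π ᵥ* A) ⬝ᵥ γ := by
        rw [sub_dotProduct, ← dotProduct_mulVec, hγA, dotProduct_smul, smul_eq_mul]; ring
    _ ≤ (∑ i, (π - π ᵥ* A) i) * M := dotProduct_le_sum_mul (sub_nonneg.mpr hπA) hM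

theorem mul_le_eigenvalue_add (hγ : 0 ≤ γ) (hμA : μ ᵥ* A = ℓ • μ) (hμ1 : ∑ i, μ i = 1)
    (hμγ : μ ⬝ᵥ γ = 1) (hM : ∀ i, γ i ≤ M) (hπw : (1 - σ) • π ≤ w) (hAw : μ ᵥ* A ≤ w)
    (hw1 : ∑ i, w i = 1) : (1 - σ) * (π ⬝ᵥ γ) ≤ ℓ + (1 - ℓ) * M := by
  have hμAγ : μ ᵥ* A ⬝ᵥ γ = ℓ := by rw [hμA, smul_dotProduct, hμγ, smul_eq_mul, mul_one]
  have hμA1 : ∑ i, (μ ᵥ* A) i = ℓ := by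
    simp only [hμA, Pi.smul_apply, smul_eq_mul, ← Finset.mul_sum, hμ1, mul_one]
  calc (1 - σ) * (π ⬝ᵥ γ) = (1 - σ) • π ⬝ᵥ γ := by rw [smul_dotProduct, smul_eq_mul]
    _ ≤ w ⬝ᵥ γ := dotProduct_le_dotProduct_of_nonneg_right hπw hγ
    _ = μ ᵥ* A ⬝ᵥ γ + (w - μ ᵥ* A) ⬝ᵥ γ := by rw [sub_dotProduct]; ring
    _ ≤ ℓ + (∑ i, (w - μ ᵥ* A) i) * M := by
        rw [hμAγ]; exact add_le_add_right (dotProduct_le_sum_mul (sub_nonneg.mpr hAw) hM) _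
    _ = ℓ + (1 - ℓ) * M := by simp only [Pi.sub_apply, Finset.sum_sub_distrib, hw1, hμA1]

theorem sum_sub_lowLossPart_le {d : ι → ℝ} (hd : 0 ≤ d) :
    ∑ i, (π - lowLossPart π d) i ≤ 4 * ∑ i, d i := by
  rw [Finset.mul_sum]
  refine Finset.sum_le_sum fun i _ => ?_
  simp only [lowLossPart, Pi.sub_apply]
  split_ifs with h
  · linarith [show (0 : ℝ) ≤ d i from hd i]
  · linarith

theorem smul_lowLossPart_le_vecMul (hπ : 0 ≤ π) (hA : ∀ i j, 0 ≤ A i j)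
    (hAπ : ∀ i j, A i j ≤ (1 + σ) * π j) (hπA : π ᵥ* A ≤ π)
    (hloss : ∑ i, (π - π ᵥ* A) i ≤ 2 * σ) (hσ0 : 0 ≤ σ) (hσ : σ ≤ 1 / 100) :
    (1 / 2 : ℝ) • lowLossPart π (π - π ᵥ* A) ≤ lowLossPart π (π - π ᵥ* A) ᵥ* A := by
  set v := lowLossPart π (π - π ᵥ* A)
  have hd : 0 ≤ π - π ᵥ* A := sub_nonneg.mpr hπA
  have hlost : ∑ i, (π - v) i ≤ 8 * σ := by
    linarith [sum_sub_lowLossPart_le (π := π) hd]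
  intro z
  by_cases hz : 4 * (π - π ᵥ* A) z ≤ π z
  · have hvz : v z = π z := if_pos hz
    have hlostA : ((π - v) ᵥ* A) z ≤ (∑ i, (π - v) i) * ((1 + σ) * π z) :=
      dotProduct_le_sum_mul (sub_nonneg.mpr (lowLossPart_le hπ)) fun i => hAπ i z
    have hsplit : (v ᵥ* A) z = (π ᵥ* A) z - ((π - v) ᵥ* A) z := by
      rw [sub_vecMul, Pi.sub_apply]; ring
    have hπz : 0 ≤ π z := hπ z
    have hlostz : ((π - v) ᵥ* A) z ≤ π z / 4 := by
      have h := mul_le_mul_of_nonneg_right hlost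
        (mul_nonneg (by linarith) hπz : 0 ≤ (1 + σ) * π z)
      have hσz := mul_le_mul_of_nonneg_right hσ hπz
      nlinarith [mul_le_mul_of_nonneg_left hσz hσ0]
    simp only [Pi.sub_apply] at hz
    rw [Pi.smul_apply, smul_eq_mul, hvz, hsplit]
    linarith
  · have hvz : v z = 0 := if_neg hz
    rw [Pi.smul_apply, hvz, smul_zero]
    exact vecMul_nonneg hA (lowLossPart_nonneg hπ) z

theorem half_le_eigenvalue (hπ : 0 ≤ π) (hπ1 : ∑ i, π i = 1) (hA : ∀ i j, 0 ≤ A i j)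
    (hAπ : ∀ i j, A i j ≤ (1 + σ) * π j) (hπA : π ᵥ* A ≤ π)
    (hloss : ∑ i, (π - π ᵥ* A) i ≤ 2 * σ) {x : ι} (hπx : π x ≤ σ)
    (hγ : 0 ≤ γ) (hγpos : ∀ i, i ≠ x → 0 < γ i) (hγA : A *ᵥ γ = ℓ • γ)
    (hσ0 : 0 < σ) (hσ : σ ≤ 1 / 100) : 1 / 2 ≤ ℓ := by
  have hmass : 1 - 8 * σ ≤ ∑ i, lowLossPart π (π - π ᵥ* A) i := by
    have h := sum_sub_lowLossPart_le (π := π) (sub_nonneg.mpr hπA)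
    simp only [Pi.sub_apply, Finset.sum_sub_distrib, hπ1] at h hloss
    linarith
  refine le_of_smul_le_vecMul hγ hγA
    (smul_lowLossPart_le_vecMul hπ hA hAπ hπA hloss hσ0.le hσ) ?_
  refine dotProduct_pos_of_apply_lt_sum (lowLossPart_nonneg hπ) hγ hγpos ?_
  linarith [lowLossPart_le (d := π - π ᵥ* A) hπ x]

theorem le_one_add_of_mixing (hA : ∀ i j, 0 ≤ A i j) (hAB : ∀ i j, A i j ≤ B i j)
    (hB : B *ᵥ 1 = 1) (hπ : 0 ≤ π) (hπ1 : ∑ i, π i = 1) (hπB : π ᵥ* B = π)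
    (hmix : ∀ i j, |B i j - π j| ≤ σ * π j) (hsurv : 1 - 2 * σ ≤ π ⬝ᵥ (A *ᵥ 1))
    {x : ι} (hπx : π x ≤ σ) (hμ : 0 ≤ μ) (hμ1 : ∑ i, μ i = 1) (hμA : μ ᵥ* A = ℓ • μ)
    (hγ : 0 ≤ γ) (hγpos : ∀ i, i ≠ x → 0 < γ i) (hγA : A *ᵥ γ = ℓ • γ) (hμγ : μ ⬝ᵥ γ = 1)
    (hσ0 : 0 < σ) (hσ : σ ≤ 1 / 100) (y : ι) : γ y ≤ 1 + 20 * σ := by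
  obtain ⟨y₀, -, hy₀⟩ := Finset.exists_max_image Finset.univ γ ⟨y, Finset.mem_univ y⟩
  have hM : ∀ i, γ i ≤ γ y₀ := fun i => hy₀ i (Finset.mem_univ i)
  have hAπ : ∀ i j, A i j ≤ (1 + σ) * π j := fun i j => by
    linarith [hAB i j, (abs_le.mp (hmix i j)).2]
  have hπA : π ᵥ* A ≤ π := (vecMul_mono_right hAB hπ).trans hπB.le
  have hloss : ∑ i, (π - π ᵥ* A) i ≤ 2 * σ := by
    rw [← dotProduct_one, sub_dotProduct, ← dotProduct_mulVec, dotProduct_one, hπ1]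
    linarith
  have hπμB : (1 - σ) • π ≤ μ ᵥ* B := fun j =>
    calc ((1 - σ) • π) j = (∑ i, μ i) * ((1 - σ) * π j) := by rw [hμ1, one_mul]; rfl
      _ ≤ (μ ᵥ* B) j :=
        sum_mul_le_dotProduct hμ fun i => by linarith [(abs_le.mp (hmix i j)).1]
  have hμB1 : ∑ i, (μ ᵥ* B) i = 1 := by
    rw [← dotProduct_one, ← dotProduct_mulVec, hB, dotProduct_one, hμ1]
  have hS : 0 < π ⬝ᵥ γ := dotProduct_pos_of_apply_lt_sum hπ hγ hγpos (by linarith)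
  exact (hM y).trans <| le_one_add_of_perron_bounds hσ0 hσ hS (hγ y₀)
    (half_le_eigenvalue hπ hπ1 hA hAπ hπA hloss hπx hγ hγpos hγA hσ0 hσ)
    (eigenvalue_mul_apply_le hγ hγA hAπ y₀)
    ((one_sub_eigenvalue_mul_le hπA hγA hM).trans (mul_le_mul_of_nonneg_right hloss (hγ y₀)))
    (mul_le_eigenvalue_add hγ hμA hμ1 hμγ hM hπμB (vecMul_mono_right hAB hμ) hμB1)

end PerronVector

section Killed

open Matrix

variable {n : ℕ} {P : Matrix (Fin n) (Fin n) ℝ} {x : Fin n}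

theorem killed_apply_nonneg (hP : ∀ i j, 0 ≤ P i j) (i j : Fin n) : 0 ≤ killed P x i j := by
  rw [killed, of_apply]; split_ifs
  · exact le_rfl
  · exact hP i j

theorem killed_apply_le (hP : ∀ i j, 0 ≤ P i j) (i j : Fin n) : killed P x i j ≤ P i j := by
  rw [killed, of_apply]; split_ifs
  · exact hP i j
  · exact le_rfl

theorem one_sub_killed_mulVec_one_le (hP : P ∈ rowStochastic ℝ (Fin n)) :
    1 - killed P x *ᵥ 1 ≤ Pi.single x 1 + fun i => P i x := by
  intro i
  have hrow : ∑ j, P i j = 1 := sum_row_of_mem_rowStochastic hP i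
  by_cases hi : i = x
  · subst hi
    simp [killed, mulVec, dotProduct, nonneg_of_mem_rowStochastic hP]
  · have hkill : ∑ j, killed P x i j = ∑ j, P i j - P i x := by
      have h : ∀ j, killed P x i j = P i j - if j = x then P i j else 0 := fun j => by
        by_cases hj : j = x <;> simp [killed, hi, hj]
      simp only [h, Finset.sum_sub_distrib, Finset.sum_ite_eq', Finset.mem_univ, if_true]
    simp only [Pi.sub_apply, Pi.add_apply, Pi.one_apply, Pi.single_apply, hi, if_false,
      zero_add, mulVec, dotProduct, mul_one]
    linarith

theorem sub_le_dotProduct_killed_pow_mulVec_one (hP : P ∈ rowStochastic ℝ (Fin n))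
    {π : Fin n → ℝ} (hπ : 0 ≤ π) (hπP : π ᵥ* P = π) (t : ℕ) :
    π ⬝ᵥ 1 - 2 * t * π x ≤ π ⬝ᵥ (killed P x ^ t *ᵥ 1) := by
  have hloss : π ⬝ᵥ (Pi.single x 1 + fun i => P i x) = 2 * π x := by
    rw [dotProduct_add, dotProduct_single_one]
    change π x + (π ᵥ* P) x = 2 * π x
    rw [hπP]; ring
  have h := sub_nsmul_le_dotProduct_pow_mulVec_one (r := Pi.single x 1 + fun i => P i x)
    (killed_apply_nonneg hP.1) hπ ((vecMul_mono_right (killed_apply_le hP.1) hπ).trans hπP.le)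
    (fun i => add_nonneg (by by_cases hi : i = x <;> simp [hi]) (hP.1 i x))
    (one_sub_killed_mulVec_one_le hP) t
  rwa [hloss, nsmul_eq_mul, ← mul_assoc, mul_comm (t : ℝ) 2] at h

theorem le_one_add_of_killed_mixing (hP : P ∈ rowStochastic ℝ (Fin n))
    {π μ γ : Fin n → ℝ} {lam σ : ℝ} {T : ℕ} (hπ : 0 ≤ π) (hπ1 : ∑ i, π i = 1)
    (hπP : π ᵥ* P = π) (hT : 1 ≤ T) (hTπ : T * π x ≤ σ)
    (hmix : ∀ i j, |(P ^ T) i j - π j| ≤ σ * π j)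
    (hμ : 0 ≤ μ) (hμ1 : ∑ i, μ i = 1) (hμK : μ ᵥ* killed P x = lam • μ)
    (hγ : 0 ≤ γ) (hγpos : ∀ i, i ≠ x → 0 < γ i) (hγK : killed P x *ᵥ γ = lam • γ)
    (hμγ : μ ⬝ᵥ γ = 1) (hσ0 : 0 < σ) (hσ : σ ≤ 1 / 100) (y : Fin n) :
    γ y ≤ 1 + 20 * σ := by
  have hπx : π x ≤ σ := by
    have : (1 : ℝ) ≤ T := by exact_mod_cast hT
    nlinarith [hπ x]
  have hsurv : 1 - 2 * σ ≤ π ⬝ᵥ (killed P x ^ T *ᵥ 1) := by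
    have h := sub_le_dotProduct_killed_pow_mulVec_one (x := x) hP hπ hπP T
    rw [dotProduct_one, hπ1] at h
    linarith
  exact le_one_add_of_mixing (pow_apply_nonneg (killed_apply_nonneg hP.1) T)
    (pow_apply_le_pow_apply (killed_apply_nonneg hP.1) (killed_apply_le hP.1) T)
    (one_vecMul_of_mem_rowStochastic (pow_mem hP T)) hπ hπ1
    (by simpa using vecMul_pow_eq_pow_smul (A := P) (c := 1) (by simpa using hπP) T)
    hmix hsurv hπx hμ hμ1 (vecMul_pow_eq_pow_smul hμK T) hγ hγpos (pow_mulVec_eq_pow_smul hγK T) hμγ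
    hσ0 hσ y

end Killed

theorem le_mul_of_rpow_mul_lt {N c a p σ : ℝ} (hN : 1 ≤ N) (hc : 2 ≤ c) (ha : 0 ≤ a)
    (hσ : 0 < σ) (hNa : N ^ c * a < σ) (hNp : 1 < N ^ 2 * p) : a ≤ σ * p := by
  have hN2 : N ^ 2 ≤ N ^ c := by
    simpa using Real.rpow_le_rpow_of_exponent_le hN hc
  have : N ^ 2 * a < N ^ 2 * (σ * p) := by
    nlinarith [mul_le_mul_of_nonneg_right hN2 ha]
  exact (lt_of_mul_lt_mul_left this (by positivity)).le

theorem gamma_uniform_upper_bound_general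
    (P : (n : ℕ) → Matrix (Fin n) (Fin n) ℝ)
    (pi : (n : ℕ) → Fin n → ℝ)
    (x : (n : ℕ) → Fin n)
    (T : ℕ → ℕ) (c : ℝ)
    (hc : 2 < c)
    (hT : Filter.Tendsto T Filter.atTop Filter.atTop)
    (hnn : ∀ n : ℕ, 2 ≤ n → ∀ y z : Fin n, 0 ≤ P n y z)
    (hrow : ∀ n : ℕ, 2 ≤ n → ∀ y : Fin n, ∑ z, P n y z = 1)
    (hpisum : ∀ n : ℕ, 2 ≤ n → ∑ y, pi n y = 1)
    (hpistat : ∀ n : ℕ, 2 ≤ n → Matrix.vecMul (pi n) (P n) = pi n)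
    (lam : ℕ → ℝ) (mu : (n : ℕ) → Fin n → ℝ)
    (hmunn : ∀ n : ℕ, 2 ≤ n → ∀ y : Fin n, 0 ≤ mu n y)
    (hmusum : ∀ n : ℕ, 2 ≤ n → ∑ y, mu n y = 1)
    (hmuqs : ∀ n : ℕ, 2 ≤ n →
      Matrix.vecMul (mu n) (killed (P n) (x n)) = lam n • mu n)
    (gamma : (n : ℕ) → Fin n → ℝ)
    (hgx : ∀ n : ℕ, 2 ≤ n → gamma n (x n) = 0)
    (hgpos : ∀ n : ℕ, 2 ≤ n → ∀ y : Fin n, y ≠ x n → 0 < gamma n y)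
    (hgeig : ∀ n : ℕ, 2 ≤ n →
      Matrix.mulVec (killed (P n) (x n)) (gamma n) = lam n • gamma n)
    (hgnorm : ∀ n : ℕ, 2 ≤ n →
      ∑ y ∈ Finset.univ.erase (x n), mu n y * gamma n y = 1)
    (HP1 : ∀ ε : ℝ, 0 < ε → ∃ N : ℕ, ∀ n : ℕ, N ≤ n → ∀ y z : Fin n,
      (n : ℝ) ^ c * |(P n ^ T n) y z - pi n z| < ε)
    (HP2 : ∀ ε : ℝ, 0 < ε → ∃ N : ℕ, ∀ n : ℕ, N ≤ n → ∀ y : Fin n,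
      (T n : ℝ) * pi n y < ε)
    (HP3 : ∀ M : ℝ, ∃ N : ℕ, ∀ n : ℕ, N ≤ n → ∀ y : Fin n,
      M < (n : ℝ) ^ 2 * pi n y)
    :
    ∀ ε : ℝ, 0 < ε → ∃ N : ℕ, ∀ n : ℕ, N ≤ n → ∀ y : Fin n, y ≠ x n →
      gamma n y ≤ 1 + ε := by
  intro ε hε
  set σ := min (ε / 20) (1 / 100)
  have hσ0 : 0 < σ := lt_min (by linarith) (by norm_num)
  obtain ⟨N, hN⟩ := eventually_atTop.mp <| (eventually_ge_atTop 2).and <|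
    (hT.eventually_ge_atTop 1).and <| (eventually_atTop.mpr (HP1 σ hσ0)).and <|
      (eventually_atTop.mpr (HP2 σ hσ0)).and (eventually_atTop.mpr (HP3 1))
  refine ⟨N, fun n hn y _ => ?_⟩
  obtain ⟨hn2, hT1, hmix, hTπ, hπ⟩ := hN n hn
  have hn1 : (1 : ℝ) ≤ n := by exact_mod_cast (by omega : 1 ≤ n)
  have hπ0 : 0 ≤ pi n := fun i =>
    (pos_of_mul_pos_right (one_pos.trans (hπ i)) (by positivity)).le
  have hγ : 0 ≤ gamma n := fun i => by
    rcases eq_or_ne i (x n) with rfl | hi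
    exacts [(hgx n hn2).ge, (hgpos n hn2 i hi).le]
  have hμγ : mu n ⬝ᵥ gamma n = 1 := by
    rw [dotProduct, ← Finset.sum_erase_add _ _ (Finset.mem_univ (x n)), hgx n hn2, mul_zero,
      add_zero, hgnorm n hn2]
  calc gamma n y ≤ 1 + 20 * σ :=
        le_one_add_of_killed_mixing
          (Matrix.mem_rowStochastic_iff_sum.mpr ⟨hnn n hn2, hrow n hn2⟩) hπ0
          (hpisum n hn2) (hpistat n hn2) hT1 (hTπ (x n)).le
          (fun i j => le_mul_of_rpow_mul_lt hn1 hc.le (abs_nonneg _) hσ0 (hmix i j) (hπ j))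
          (hmunn n hn2) (hmusum n hn2) (hmuqs n hn2) hγ (hgpos n hn2) (hgeig n hn2) hμγ hσ0
          (min_le_right _ _) y
    _ ≤ 1 + ε := by linarith [min_le_left (ε / 20) (1 / 100)]

theorem gamma_uniform_upper_bound
    (P : (n : ℕ) → Matrix (Fin n) (Fin n) ℝ)
    (pi : (n : ℕ) → Fin n → ℝ)
    (x : (n : ℕ) → Fin n)
    (T : ℕ → ℕ) (c : ℝ)
    (hc : 2 < c)
    (hT : Filter.Tendsto T Filter.atTop Filter.atTop)
    (hnn : ∀ n : ℕ, 2 ≤ n → ∀ y z : Fin n, 0 ≤ P n y z)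
    (hrow : ∀ n : ℕ, 2 ≤ n → ∀ y : Fin n, ∑ z, P n y z = 1)
    (hirr : ∀ n : ℕ, 2 ≤ n → ∀ y z : Fin n, ∃ t : ℕ, 0 < (P n ^ t) y z)
    (hpinn : ∀ n : ℕ, 2 ≤ n → ∀ y : Fin n, 0 ≤ pi n y)
    (hpisum : ∀ n : ℕ, 2 ≤ n → ∑ y, pi n y = 1)
    (hpistat : ∀ n : ℕ, 2 ≤ n → Matrix.vecMul (pi n) (P n) = pi n)
    (hpiuniq : ∀ n : ℕ, 2 ≤ n → ∀ rho : Fin n → ℝ, (∀ y, 0 ≤ rho y) →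
      (∑ y, rho y = 1) → Matrix.vecMul rho (P n) = rho → rho = pi n)
    (hkirr : ∀ n : ℕ, 2 ≤ n → ∀ y z : Fin n, y ≠ x n → z ≠ x n →
      ∃ t : ℕ, 0 < ((killed (P n) (x n)) ^ t) y z)
    (lam : ℕ → ℝ) (mu : (n : ℕ) → Fin n → ℝ)
    (hlam : ∀ n : ℕ, 2 ≤ n → lam n ∈ Set.Ioo (0 : ℝ) 1)
    (hmunn : ∀ n : ℕ, 2 ≤ n → ∀ y : Fin n, 0 ≤ mu n y)
    (hmux : ∀ n : ℕ, 2 ≤ n → mu n (x n) = 0)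
    (hmusum : ∀ n : ℕ, 2 ≤ n → ∑ y, mu n y = 1)
    (hmuqs : ∀ n : ℕ, 2 ≤ n →
      Matrix.vecMul (mu n) (killed (P n) (x n)) = lam n • mu n)
    (gamma : (n : ℕ) → Fin n → ℝ)
    (hgx : ∀ n : ℕ, 2 ≤ n → gamma n (x n) = 0)
    (hgpos : ∀ n : ℕ, 2 ≤ n → ∀ y : Fin n, y ≠ x n → 0 < gamma n y)
    (hgeig : ∀ n : ℕ, 2 ≤ n →
      Matrix.mulVec (killed (P n) (x n)) (gamma n) = lam n • gamma n)
    (hgnorm : ∀ n : ℕ, 2 ≤ n →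
      ∑ y ∈ Finset.univ.erase (x n), mu n y * gamma n y = 1)
    (HP1 : ∀ ε : ℝ, 0 < ε → ∃ N : ℕ, ∀ n : ℕ, N ≤ n → ∀ y z : Fin n,
      (n : ℝ) ^ c * |(P n ^ T n) y z - pi n z| < ε)
    (HP2 : ∀ ε : ℝ, 0 < ε → ∃ N : ℕ, ∀ n : ℕ, N ≤ n → ∀ y : Fin n,
      (T n : ℝ) * pi n y < ε)
    (HP3 : ∀ M : ℝ, ∃ N : ℕ, ∀ n : ℕ, N ≤ n → ∀ y : Fin n,
      M < (n : ℝ) ^ 2 * pi n y)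
    :
    ∀ ε : ℝ, 0 < ε → ∃ N : ℕ, ∀ n : ℕ, N ≤ n → ∀ y : Fin n, y ≠ x n →
      gamma n y ≤ 1 + ε :=
  gamma_uniform_upper_bound_general P pi x T c hc hT hnn hrow hpisum hpistat lam mu hmunn hmusum
    hmuqs gamma hgx hgpos hgeig hgnorm HP1 HP2 HP3
end

section
/- Replacing stationarity by T-step evolution: under (HP1)–(HP3), sup over y ∈ X_n and t ∈ ℕ of | ℙ_{μ_{T_n}^y}(τ_{x_n} > t) / ℙ_{π_n}(τ_{x_n} > t) − 1 | → 0 as n → ∞, where μ_T^y := δ_y P_n^T denotes the distribution of the chain started at y and run for T steps. -/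
/-!
Once `n` is large, (HP1) with `c > 2` and (HP3) give `|μ_T^y(z) - π(z)| ≤ ε π(z)` for all `y, z`.
The no-hit probability is linear in the initial distribution with nonnegative coefficients, so
this relative bound passes to `ℙ_μ(τ > t)` against `ℙ_π(τ > t)`, uniformly in `t`. The
denominator is positive: in the killed chain on at least two states, irreducibility gives every
state `y ≠ x` a transition to a state `w ≠ x`, so every row of the killed kernel's powers keeps
some mass off `x`.
-/

open Finset Filter

namespace Matrix

variable {ι R : Type*} [Fintype ι] [Semiring R] {A B : Matrix ι ι R}

lemma exists_apply_ne_zero_of_pow_apply_ne_zero [DecidableEq ι] {i j : ι} (hij : i ≠ j) {t : ℕ}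
    (h : (A ^ t) i j ≠ 0) : ∃ w, A i w ≠ 0 := by
  cases t with
  | zero => simp [one_apply_ne hij] at h
  | succ s =>
    by_contra! hrow
    simp [pow_succ', mul_apply, hrow] at h

variable [PartialOrder R] [IsStrictOrderedRing R]

lemma mul_apply_pos (hA : ∀ i j, 0 ≤ A i j) (hB : ∀ i j, 0 ≤ B i j) {i j k : ι}
    (hij : 0 < A i j) (hjk : 0 < B j k) : 0 < (A * B) i k :=
  Finset.sum_pos' (fun l _ => mul_nonneg (hA i l) (hB l k)) ⟨j, mem_univ j, mul_pos hij hjk⟩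

lemma exists_pow_apply_pos_of_exists_apply_pos [DecidableEq ι] (hA : ∀ i j, 0 ≤ A i j)
    {S : Set ι} (hS : ∀ i ∈ S, ∃ j ∈ S, 0 < A i j) (t : ℕ) :
    ∀ i ∈ S, ∃ j ∈ S, 0 < (A ^ t) i j := by
  induction t with
  | zero => exact fun i hi => ⟨i, hi, by simp⟩
  | succ t ih =>
    intro i hi
    obtain ⟨j, hj, hij⟩ := ih i hi
    obtain ⟨k, hk, hjk⟩ := hS j hj
    exact ⟨k, hk, pow_succ A t ▸ mul_apply_pos (pow_apply_nonneg hA t) hA hij hjk⟩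

end Matrix

section Killed

variable {n : ℕ} {P : Matrix (Fin n) (Fin n) ℝ} {x : Fin n}

lemma killed_nonneg (hP : ∀ y z, 0 ≤ P y z) (y z : Fin n) : 0 ≤ killed P x y z := by
  simp only [killed, Matrix.of_apply]
  split_ifs <;> simp_all

lemma ne_of_killed_apply_ne_zero {y z : Fin n} (h : killed P x y z ≠ 0) : z ≠ x := by
  rintro rfl
  simp [killed] at h

/-- Take `z ∉ {x, y}`: the first step of a path of the killed chain from `y` to `z` avoids `x`. -/
lemma exists_killed_apply_pos (hn : 3 ≤ n) (hP : ∀ y z, 0 ≤ P y z)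
    (hkirr : ∀ y z : Fin n, y ≠ x → z ≠ x → ∃ t : ℕ, 0 < ((killed P x) ^ t) y z)
    {y : Fin n} (hy : y ≠ x) : ∃ w, w ≠ x ∧ 0 < killed P x y w := by
  have hcard : 0 < ((univ.erase x).erase y).card := by
    rw [card_erase_of_mem (mem_erase.mpr ⟨hy, mem_univ y⟩), card_erase_of_mem (mem_univ x),
      card_univ, Fintype.card_fin]
    omega
  obtain ⟨z, hz⟩ := card_pos.mp hcard
  obtain ⟨hzy, hzx⟩ : z ≠ y ∧ z ≠ x := by simpa using hz
  obtain ⟨t, ht⟩ := hkirr y z hy hzx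
  obtain ⟨w, hw⟩ := Matrix.exists_apply_ne_zero_of_pow_apply_ne_zero hzy.symm ht.ne'
  exact ⟨w, ne_of_killed_apply_ne_zero hw, (killed_nonneg hP y w).lt_of_ne' hw⟩

end Killed

section NoHit

variable {n : ℕ} {P : Matrix (Fin n) (Fin n) ℝ} {x : Fin n} {a b : Fin n → ℝ} {t : ℕ}

lemma noHit_sub : noHit P x (a - b) t = noHit P x a t - noHit P x b t := by
  simp only [noHit, Pi.sub_apply, sub_mul, sum_sub_distrib]

lemma noHit_smul (r : ℝ) : noHit P x (r • a) t = r * noHit P x a t := by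
  simp only [noHit, Pi.smul_apply, smul_eq_mul, mul_sum, mul_assoc]

lemma noHit_mono (hP : ∀ y z, 0 ≤ P y z) (hab : a ≤ b) : noHit P x a t ≤ noHit P x b t :=
  sum_le_sum fun y _ => sum_le_sum fun z _ =>
    mul_le_mul_of_nonneg_right (hab y) (Matrix.pow_apply_nonneg (killed_nonneg hP) t y z)

lemma abs_noHit_le (hP : ∀ y z, 0 ≤ P y z) : |noHit P x a t| ≤ noHit P x |a| t := by
  have hneg : noHit P x ((-1 : ℝ) • |a|) t ≤ noHit P x a t :=
    noHit_mono hP fun y => by simp [neg_abs_le]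
  rw [noHit_smul] at hneg
  exact abs_le.mpr ⟨by linarith, noHit_mono hP (le_abs_self a)⟩

lemma noHit_pos (hn : 3 ≤ n) (hP : ∀ y z, 0 ≤ P y z)
    (hkirr : ∀ y z : Fin n, y ≠ x → z ≠ x → ∃ t : ℕ, 0 < ((killed P x) ^ t) y z)
    (ha : ∀ y, 0 < a y) : 0 < noHit P x a t := by
  have hK := killed_nonneg (x := x) hP
  have : Nontrivial (Fin n) := Fin.nontrivial_iff_two_le.mpr (by omega)
  obtain ⟨y, hy⟩ := exists_ne x
  obtain ⟨w, hw, hyw⟩ := Matrix.exists_pow_apply_pos_of_exists_apply_pos hK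
    (S := {x}ᶜ) (fun y hy => exists_killed_apply_pos hn hP hkirr hy) t y hy
  have hterm : ∀ y z, 0 ≤ a y * ((killed P x) ^ t) y z :=
    fun y z => mul_nonneg (ha y).le (Matrix.pow_apply_nonneg hK t y z)
  exact sum_pos' (fun y _ => sum_nonneg fun z _ => hterm y z) ⟨y, by simpa using hy,
    sum_pos' (fun z _ => hterm y z) ⟨w, by simpa using hw, mul_pos (ha y) hyw⟩⟩

lemma abs_noHit_div_sub_one_le (hP : ∀ y z, 0 ≤ P y z) (hb : 0 < noHit P x b t) {r : ℝ}
    (hab : ∀ y, |a y - b y| ≤ r * b y) : |noHit P x a t / noHit P x b t - 1| ≤ r := by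
  have hdiff : |noHit P x a t - noHit P x b t| ≤ r * noHit P x b t := calc
    _ = |noHit P x (a - b) t| := by rw [noHit_sub]
    _ ≤ noHit P x |a - b| t := abs_noHit_le hP
    _ ≤ noHit P x (r • b) t := noHit_mono hP hab
    _ = r * noHit P x b t := noHit_smul r
  rwa [div_sub_one hb.ne', abs_div, abs_of_pos hb, div_le_iff₀ hb]

end NoHit

lemma eventually_abs_sub_lt_mul (f : (n : ℕ) → Fin n → Fin n → ℝ) (pi : (n : ℕ) → Fin n → ℝ)
    {c : ℝ} (hc : 2 ≤ c)
    (hf : ∀ ε : ℝ, 0 < ε → ∃ N : ℕ, ∀ n : ℕ, N ≤ n → ∀ y z : Fin n,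
      (n : ℝ) ^ c * |f n y z - pi n z| < ε)
    (hpi : ∀ M : ℝ, ∃ N : ℕ, ∀ n : ℕ, N ≤ n → ∀ y : Fin n, M < (n : ℝ) ^ 2 * pi n y)
    (ε : ℝ) (hε : 0 < ε) :
    ∃ N : ℕ, ∀ n : ℕ, N ≤ n → ∀ y z : Fin n, |f n y z - pi n z| < ε * pi n z := by
  obtain ⟨N₁, hN₁⟩ := hf ε hε
  obtain ⟨N₂, hN₂⟩ := hpi 1
  refine ⟨max (max N₁ N₂) 1, fun n hn y z => ?_⟩
  have hn1 : (1 : ℝ) ≤ n := by exact_mod_cast le_of_max_le_right hn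
  have hpow : (n : ℝ) ^ (2 : ℕ) ≤ (n : ℝ) ^ c := by
    exact_mod_cast Real.rpow_le_rpow_of_exponent_le hn1 hc
  have hfar := hN₁ n (by omega) y z
  have hπ := hN₂ n (by omega) z
  have hπpos : 0 < pi n z := pos_of_mul_pos_right (one_pos.trans hπ) (by positivity)
  refine lt_of_mul_lt_mul_left (a := (n : ℝ) ^ c) ?_ (by positivity)
  calc (n : ℝ) ^ c * |f n y z - pi n z| < ε := hfar
    _ < ε * ((n : ℝ) ^ 2 * pi n z) := lt_mul_of_one_lt_right hε hπ
    _ ≤ (n : ℝ) ^ c * (ε * pi n z) := by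
      nlinarith [mul_le_mul_of_nonneg_right hpow (mul_pos hε hπpos).le]

theorem tail_from_T_step_evolution_general
    (P : (n : ℕ) → Matrix (Fin n) (Fin n) ℝ)
    (pi : (n : ℕ) → Fin n → ℝ)
    (x : (n : ℕ) → Fin n)
    (T : ℕ → ℕ) (c : ℝ)
    (hc : 2 < c)
    (hnn : ∀ n : ℕ, 2 ≤ n → ∀ y z : Fin n, 0 ≤ P n y z)
    (hkirr : ∀ n : ℕ, 2 ≤ n → ∀ y z : Fin n, y ≠ x n → z ≠ x n →
      ∃ t : ℕ, 0 < ((killed (P n) (x n)) ^ t) y z)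
    (HP1 : ∀ ε : ℝ, 0 < ε → ∃ N : ℕ, ∀ n : ℕ, N ≤ n → ∀ y z : Fin n,
      (n : ℝ) ^ c * |(P n ^ T n) y z - pi n z| < ε)
    (HP3 : ∀ M : ℝ, ∃ N : ℕ, ∀ n : ℕ, N ≤ n → ∀ y : Fin n,
      M < (n : ℝ) ^ 2 * pi n y)
    :
    ∀ ε : ℝ, 0 < ε → ∃ N : ℕ, ∀ n : ℕ, N ≤ n → ∀ y : Fin n, ∀ t : ℕ,
      |noHit (P n) (x n) (fun z => (P n ^ T n) y z) t
        / noHit (P n) (x n) (pi n) t - 1| < ε := by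
  intro ε hε
  obtain ⟨N, hN⟩ := eventually_abs_sub_lt_mul (fun n => P n ^ T n) pi hc.le HP1 HP3
    (ε / 2) (half_pos hε)
  refine ⟨max N 3, fun n hn y t => ?_⟩
  have hn3 : 3 ≤ n := le_of_max_le_right hn
  have hclose := hN n (le_of_max_le_left hn) y
  have hpi : ∀ z, 0 < pi n z := fun z =>
    pos_of_mul_pos_right ((abs_nonneg _).trans_lt (hclose z)) (half_pos hε).le
  calc _ ≤ ε / 2 := abs_noHit_div_sub_one_le (hnn n (by omega))
        (noHit_pos hn3 (hnn n (by omega)) (hkirr n (by omega)) hpi) fun z => (hclose z).le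
    _ < ε := half_lt_self hε

theorem tail_from_T_step_evolution
    (P : (n : ℕ) → Matrix (Fin n) (Fin n) ℝ)
    (pi : (n : ℕ) → Fin n → ℝ)
    (x : (n : ℕ) → Fin n)
    (T : ℕ → ℕ) (c : ℝ)
    (hc : 2 < c)
    (hT : Filter.Tendsto T Filter.atTop Filter.atTop)
    (hnn : ∀ n : ℕ, 2 ≤ n → ∀ y z : Fin n, 0 ≤ P n y z)
    (hrow : ∀ n : ℕ, 2 ≤ n → ∀ y : Fin n, ∑ z, P n y z = 1)
    (hirr : ∀ n : ℕ, 2 ≤ n → ∀ y z : Fin n, ∃ t : ℕ, 0 < (P n ^ t) y z)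
    (hpinn : ∀ n : ℕ, 2 ≤ n → ∀ y : Fin n, 0 ≤ pi n y)
    (hpisum : ∀ n : ℕ, 2 ≤ n → ∑ y, pi n y = 1)
    (hpistat : ∀ n : ℕ, 2 ≤ n → Matrix.vecMul (pi n) (P n) = pi n)
    (hpiuniq : ∀ n : ℕ, 2 ≤ n → ∀ rho : Fin n → ℝ, (∀ y, 0 ≤ rho y) →
      (∑ y, rho y = 1) → Matrix.vecMul rho (P n) = rho → rho = pi n)
    (hkirr : ∀ n : ℕ, 2 ≤ n → ∀ y z : Fin n, y ≠ x n → z ≠ x n →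
      ∃ t : ℕ, 0 < ((killed (P n) (x n)) ^ t) y z)
    (HP1 : ∀ ε : ℝ, 0 < ε → ∃ N : ℕ, ∀ n : ℕ, N ≤ n → ∀ y z : Fin n,
      (n : ℝ) ^ c * |(P n ^ T n) y z - pi n z| < ε)
    (HP2 : ∀ ε : ℝ, 0 < ε → ∃ N : ℕ, ∀ n : ℕ, N ≤ n → ∀ y : Fin n,
      (T n : ℝ) * pi n y < ε)
    (HP3 : ∀ M : ℝ, ∃ N : ℕ, ∀ n : ℕ, N ≤ n → ∀ y : Fin n,
      M < (n : ℝ) ^ 2 * pi n y)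
    :
    ∀ ε : ℝ, 0 < ε → ∃ N : ℕ, ∀ n : ℕ, N ≤ n → ∀ y : Fin n, ∀ t : ℕ,
      |noHit (P n) (x n) (fun z => (P n ^ T n) y z) t
        / noHit (P n) (x n) (pi n) t - 1| < ε :=
  tail_from_T_step_evolution_general P pi x T c hc hnn hkirr HP1 HP3
end

section
/- Slow decay of the stationary tail over one mixing window: under (HP1)–(HP3), for every ε > 0 there exists N such that for all n ≥ N and all t ∈ ℕ, ℙ_{π_n}(τ_{x_n} > t + T_n) ≥ (1 − ε) · ℙ_{π_n}(τ_{x_n} > t). -/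
/-! Write `f t = ℙ_π(τ_x > t)`. Started from `π`, the killed chain stays below `π`, so `f` loses at
most `π(x)` per step. From wherever the surviving mass sits at time `a`, it reaches `x` in the
`T + 1` further steps with probability at most `max_v P^(T+1)(v, x) ≤ 2 π(x)` (this is HP1 with
HP3: `n^(-c) < n^(-2) < π(x)`), so the loss at time `a + T` is at most `2 π(x) f(a)`. Strong
induction over windows of length `T` then gives `f t - f (t + T) ≤ 4 T π(x) f t`, and
`T π(x) → 0` by HP2. -/

open Finset Filter

open Matrix

lemma sub_add_le_mul_of_forall_sub_succ_le {f : ℕ → ℝ} {b : ℝ} (u m : ℕ)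
    (h : ∀ s < m, f (u + s) - f (u + s + 1) ≤ b) : f u - f (u + m) ≤ m * b := by
  induction m with
  | zero => simp
  | succ m ih =>
    have hm := h m m.lt_succ_self
    have := ih fun s hs => h s (hs.trans m.lt_succ_self)
    push_cast
    rw [← add_assoc]
    linarith

theorem sub_add_le_of_lagged_decrements {f : ℕ → ℝ} {p : ℝ} {T : ℕ}
    (hf : ∀ u, 0 ≤ f u) (hanti : Antitone f) (hf0 : 1 - p ≤ f 0)
    (hstep : ∀ u, f u - f (u + 1) ≤ p)
    (hlag : ∀ a, f (a + T) - f (a + T + 1) ≤ 2 * p * f a)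
    (hTp : 8 * T * p ≤ 1) (u : ℕ) : f u - f (u + T) ≤ 4 * T * p * f u := by
  have hp : 0 ≤ p := (sub_nonneg.2 (hanti (Nat.le_succ 0))).trans (hstep 0)
  have hTp0 : 0 ≤ (T : ℝ) * p := by positivity
  rcases Nat.eq_zero_or_pos T with rfl | hT
  · simp
  induction u using Nat.strong_induction_on with
  | _ u IH =>
    rcases lt_or_ge u T with hu | hu
    · have hdrain : f u - f (u + T) ≤ T * p :=
        sub_add_le_mul_of_forall_sub_succ_le u T fun s _ => hstep (u + s)
      have hstart : f 0 - f (0 + u) ≤ u * p :=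
        sub_add_le_mul_of_forall_sub_succ_le 0 u fun s _ => hstep (0 + s)
      have huT : ((u : ℝ) + 1) * p ≤ T * p := by gcongr; exact_mod_cast hu
      have hfu : 1 / 4 ≤ f u := by rw [zero_add] at hstart; linarith
      linarith [mul_le_mul_of_nonneg_left hfu hTp0]
    · obtain ⟨a, rfl⟩ : ∃ a, u = a + T := ⟨u - T, (Nat.sub_add_cancel hu).symm⟩
      have hhalf : f a ≤ 2 * f (a + T) := by
        have := IH a (by omega)
        linarith [mul_nonneg (by linarith : (0 : ℝ) ≤ 1 / 2 - 4 * T * p) (hf a)]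
      have hdrain := sub_add_le_mul_of_forall_sub_succ_le (f := f) (b := 4 * p * f (a + T))
        (a + T) T fun s _ => by
          have hmono : f (a + s) ≤ 2 * f (a + T) := (hanti (Nat.le_add_right a s)).trans hhalf
          rw [show a + T + s = a + s + T by ring]
          linarith [hlag (a + s), mul_le_mul_of_nonneg_left hmono (by positivity : 0 ≤ 2 * p)]
      linarith

section

variable {R ι : Type*} [Semiring R] [Fintype ι] [DecidableEq ι]

lemma Matrix.vecMul_pow_eq_self {A : Matrix ι ι R} {v : ι → R} (hv : v ᵥ* A = v) (t : ℕ) :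
    v ᵥ* A ^ t = v := by
  induction t with
  | zero => simp
  | succ t ih => rw [pow_succ, ← vecMul_vecMul, ih, hv]

variable [PartialOrder R] [IsOrderedRing R]

lemma Matrix.pow_apply_le_pow_apply_s11 {A B : Matrix ι ι R} (hA : ∀ i j, 0 ≤ A i j)
    (hAB : ∀ i j, A i j ≤ B i j) (t : ℕ) (i j : ι) : (A ^ t) i j ≤ (B ^ t) i j := by
  induction t generalizing j with
  | zero => rfl
  | succ t ih =>
    rw [pow_succ, pow_succ, mul_apply, mul_apply]
    exact sum_le_sum fun k _ => mul_le_mul (ih k) (hAB k j) (hA k j)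
      (pow_apply_nonneg (fun i j => (hA i j).trans (hAB i j)) t i k)

end

namespace killed

variable {n : ℕ} {P : Matrix (Fin n) (Fin n) ℝ} {x : Fin n}

lemma apply_nonneg (hP : ∀ y z, 0 ≤ P y z) (y z : Fin n) : 0 ≤ killed P x y z := by
  simp only [killed, of_apply]
  split_ifs
  exacts [le_rfl, hP y z]

lemma apply_le (hP : ∀ y z, 0 ≤ P y z) (y z : Fin n) : killed P x y z ≤ P y z := by
  simp only [killed, of_apply]
  split_ifs
  exacts [hP y z, le_rfl]

lemma pow_apply_le (hP : ∀ y z, 0 ≤ P y z) (t : ℕ) (y z : Fin n) :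
    (killed P x ^ t) y z ≤ (P ^ t) y z :=
  pow_apply_le_pow_apply_s11 (apply_nonneg hP) (apply_le hP) t y z

lemma pow_apply_self_left {z : Fin n} (hz : z ≠ x) (t : ℕ) : (killed P x ^ t) x z = 0 := by
  cases t with
  | zero => simp [one_apply, hz.symm]
  | succ t => simp [pow_succ', mul_apply, killed]

lemma sum_erase_apply {w : Fin n} (hP : ∑ z, P w z = 1) (hw : w ≠ x) :
    ∑ z ∈ univ.erase x, killed P x w z = 1 - P w x := by
  rw [eq_sub_iff_add_eq, ← hP,
    ← sum_erase_add _ _ (mem_univ x)]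
  congr 1
  exact sum_congr rfl fun z hz => by simp [killed, hw, ne_of_mem_erase hz]

end killed

section

variable {ι : Type*} [Fintype ι] [DecidableEq ι]

lemma Matrix.mul_apply_le_of_mem_rowStochastic {M N : Matrix ι ι ℝ} (hM : M ∈ rowStochastic ℝ ι)
    {x : ι} {b : ℝ} (hN : ∀ w, N w x ≤ b) (v : ι) : (M * N) v x ≤ b :=
  calc (M * N) v x = ∑ w, M v w * N w x := mul_apply
    _ ≤ ∑ w, M v w * b := sum_le_sum fun w _ =>
      mul_le_mul_of_nonneg_left (hN w) (nonneg_of_mem_rowStochastic hM)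
    _ = b := by rw [← sum_mul, sum_row_of_mem_rowStochastic hM, one_mul]

end

section

variable {n : ℕ} {P : Matrix (Fin n) (Fin n) ℝ} {x : Fin n} {α : Fin n → ℝ}

lemma sum_erase_vecMul_killed_pow_mul (ν g : Fin n → ℝ) (t : ℕ) :
    ∑ w ∈ univ.erase x, (ν ᵥ* killed P x ^ t) w * g w
      = ∑ v ∈ univ.erase x, ν v * ∑ w ∈ univ.erase x, (killed P x ^ t) v w * g w := by
  have hx : ν x * ∑ w ∈ univ.erase x, (killed P x ^ t) x w * g w = 0 := by
    rw [sum_eq_zero fun w hw => by rw [killed.pow_apply_self_left (ne_of_mem_erase hw), zero_mul],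
      mul_zero]
  rw [sum_erase (f := fun v => ν v * ∑ w ∈ univ.erase x, (killed P x ^ t) v w * g w) univ hx]
  simp only [vecMul, dotProduct, sum_mul, mul_sum, mul_assoc]
  exact sum_comm

lemma noHit_eq_sum_vecMul (t : ℕ) :
    noHit P x α t = ∑ z ∈ univ.erase x, (α ᵥ* killed P x ^ t) z := by
  have h := sum_erase_vecMul_killed_pow_mul (P := P) (x := x) α 1 t
  simp only [Pi.one_apply, mul_one, mul_sum] at h
  rw [h, noHit]

lemma vecMul_killed_pow_nonneg (hP : ∀ y z, 0 ≤ P y z) (hα : ∀ y, 0 ≤ α y)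
    (t : ℕ) (z : Fin n) : 0 ≤ (α ᵥ* killed P x ^ t) z := by
  simp only [vecMul, dotProduct]
  exact sum_nonneg fun y _ => mul_nonneg (hα y) (pow_apply_nonneg (killed.apply_nonneg hP) t y z)

lemma vecMul_killed_pow_le (hP : ∀ y z, 0 ≤ P y z) (hα : ∀ y, 0 ≤ α y)
    (hstat : α ᵥ* P = α) (t : ℕ) (z : Fin n) : (α ᵥ* killed P x ^ t) z ≤ α z :=
  calc (α ᵥ* killed P x ^ t) z ≤ (α ᵥ* P ^ t) z := by
        simp only [vecMul, dotProduct]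
        exact sum_le_sum fun y _ => mul_le_mul_of_nonneg_left (killed.pow_apply_le hP t y z) (hα y)
    _ = α z := by rw [vecMul_pow_eq_self hstat]

lemma noHit_nonneg (hP : ∀ y z, 0 ≤ P y z) (hα : ∀ y, 0 ≤ α y) (t : ℕ) :
    0 ≤ noHit P x α t := by
  rw [noHit_eq_sum_vecMul]
  exact sum_nonneg fun z _ => vecMul_killed_pow_nonneg hP hα t z

lemma noHit_zero (hα : ∑ y, α y = 1) : noHit P x α 0 = 1 - α x := by
  rw [noHit_eq_sum_vecMul, pow_zero, vecMul_one, sum_erase_eq_sub (mem_univ x), hα]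

/-- `firstHit P x α u = ℙ_α(τ_x = u + 1)`. -/
noncomputable def firstHit (P : Matrix (Fin n) (Fin n) ℝ) (x : Fin n) (α : Fin n → ℝ)
    (u : ℕ) : ℝ :=
  ∑ w ∈ univ.erase x, (α ᵥ* killed P x ^ u) w * P w x

lemma noHit_succ (hP : ∀ y, ∑ z, P y z = 1) (u : ℕ) :
    noHit P x α (u + 1) = noHit P x α u - firstHit P x α u := by
  have hsucc := sum_erase_vecMul_killed_pow_mul (x := x) (P := P) (α ᵥ* killed P x ^ u) 1 1
  simp only [Pi.one_apply, mul_one, pow_one, vecMul_vecMul, ← pow_succ] at hsucc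
  rw [noHit_eq_sum_vecMul, hsucc, noHit_eq_sum_vecMul, firstHit, ← sum_sub_distrib]
  exact sum_congr rfl fun w hw => by
    rw [killed.sum_erase_apply (hP w) (ne_of_mem_erase hw)]
    ring

lemma firstHit_nonneg (hP : ∀ y z, 0 ≤ P y z) (hα : ∀ y, 0 ≤ α y) (u : ℕ) :
    0 ≤ firstHit P x α u :=
  sum_nonneg fun w _ =>
    mul_nonneg (vecMul_killed_pow_nonneg hP hα u w) (hP w x)

lemma firstHit_le (hP : ∀ y z, 0 ≤ P y z) (hα : ∀ y, 0 ≤ α y)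
    (hstat : α ᵥ* P = α) (u : ℕ) : firstHit P x α u ≤ α x :=
  calc firstHit P x α u ≤ ∑ w ∈ univ.erase x, α w * P w x :=
        sum_le_sum fun w _ => mul_le_mul_of_nonneg_right (vecMul_killed_pow_le hP hα hstat u w)
          (hP w x)
    _ ≤ ∑ w, α w * P w x := sum_le_sum_of_subset_of_nonneg (subset_univ _) fun w _ _ =>
        mul_nonneg (hα w) (hP w x)
    _ = α x := congrFun hstat x

lemma firstHit_add_le (hP : ∀ y z, 0 ≤ P y z) (hα : ∀ y, 0 ≤ α y) {T : ℕ} {b : ℝ}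
    (hb : ∀ v, (P ^ (T + 1)) v x ≤ b) (a : ℕ) :
    firstHit P x α (a + T) ≤ b * noHit P x α a := by
  have hreach : ∀ v, ∑ w ∈ univ.erase x, (killed P x ^ T) v w * P w x ≤ b := fun v =>
    calc ∑ w ∈ univ.erase x, (killed P x ^ T) v w * P w x ≤ ∑ w, (P ^ T) v w * P w x :=
          (sum_le_sum fun w _ => mul_le_mul_of_nonneg_right (killed.pow_apply_le hP T v w)
            (hP w x)).trans
          (sum_le_sum_of_subset_of_nonneg (subset_univ _) fun w _ _ =>
            mul_nonneg (pow_apply_nonneg hP T v w) (hP w x))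
      _ ≤ b := by rw [← mul_apply, ← pow_succ]; exact hb v
  calc firstHit P x α (a + T)
      = ∑ v ∈ univ.erase x, (α ᵥ* killed P x ^ a) v
          * ∑ w ∈ univ.erase x, (killed P x ^ T) v w * P w x := by
        rw [firstHit, pow_add, ← vecMul_vecMul, sum_erase_vecMul_killed_pow_mul]
    _ ≤ ∑ v ∈ univ.erase x, (α ᵥ* killed P x ^ a) v * b :=
        sum_le_sum fun v _ => mul_le_mul_of_nonneg_left (hreach v)
          (vecMul_killed_pow_nonneg hP hα a v)
    _ = b * noHit P x α a := by rw [← sum_mul, noHit_eq_sum_vecMul, mul_comm]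

end

theorem noHit_sub_noHit_add_le {n : ℕ} {P : Matrix (Fin n) (Fin n) ℝ} {x : Fin n}
    {π : Fin n → ℝ} (hP : P ∈ rowStochastic ℝ (Fin n)) (hπ : ∀ y, 0 ≤ π y)
    (hπsum : ∑ y, π y = 1) (hstat : π ᵥ* P = π) {T : ℕ}
    (hmix : ∀ w, (P ^ T) w x ≤ 2 * π x) (hT : 8 * T * π x ≤ 1) (t : ℕ) :
    noHit P x π t - noHit P x π (t + T) ≤ 4 * T * π x * noHit P x π t := by
  have hdrop : ∀ u, noHit P x π u - noHit P x π (u + 1) = firstHit P x π u := fun u => by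
    rw [noHit_succ (sum_row_of_mem_rowStochastic hP)]; ring
  refine sub_add_le_of_lagged_decrements (noHit_nonneg hP.1 hπ)
    (antitone_nat_of_succ_le fun u => ?_) (noHit_zero hπsum).ge
    (fun u => (hdrop u).trans_le (firstHit_le hP.1 hπ hstat u))
    (fun a => (hdrop (a + T)).trans_le ?_) hT t
  · linarith [hdrop u, firstHit_nonneg (x := x) hP.1 hπ u]
  · exact firstHit_add_le hP.1 hπ (fun v => by
      rw [pow_succ']; exact mul_apply_le_of_mem_rowStochastic hP hmix v) a

lemma lt_of_rpow_mul_lt_one_lt_sq_mul {n : ℕ} {c d q : ℝ} (hc : 2 ≤ c) (hd : 0 ≤ d)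
    (hdc : (n : ℝ) ^ c * d < 1) (hq : 1 < (n : ℝ) ^ 2 * q) : d < q := by
  have hn : (1 : ℝ) ≤ n := by
    rcases n.eq_zero_or_pos with rfl | hn
    · norm_num at hq
    · exact_mod_cast hn
  have hsq : (n : ℝ) ^ 2 ≤ (n : ℝ) ^ c := by
    rw [← Real.rpow_natCast]; exact Real.rpow_le_rpow_of_exponent_le hn (by norm_num [hc])
  have : (n : ℝ) ^ 2 * d < (n : ℝ) ^ 2 * q := by linarith [mul_le_mul_of_nonneg_right hsq hd]
  exact lt_of_mul_lt_mul_left this (by positivity)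

theorem slow_decay_over_mixing_window_general
    (P : (n : ℕ) → Matrix (Fin n) (Fin n) ℝ)
    (pi : (n : ℕ) → Fin n → ℝ)
    (x : (n : ℕ) → Fin n)
    (T : ℕ → ℕ) (c : ℝ)
    (hc : 2 < c)
    (hnn : ∀ n : ℕ, 2 ≤ n → ∀ y z : Fin n, 0 ≤ P n y z)
    (hrow : ∀ n : ℕ, 2 ≤ n → ∀ y : Fin n, ∑ z, P n y z = 1)
    (hpinn : ∀ n : ℕ, 2 ≤ n → ∀ y : Fin n, 0 ≤ pi n y)
    (hpisum : ∀ n : ℕ, 2 ≤ n → ∑ y, pi n y = 1)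
    (hpistat : ∀ n : ℕ, 2 ≤ n → Matrix.vecMul (pi n) (P n) = pi n)
    (HP1 : ∀ ε : ℝ, 0 < ε → ∃ N : ℕ, ∀ n : ℕ, N ≤ n → ∀ y z : Fin n,
      (n : ℝ) ^ c * |(P n ^ T n) y z - pi n z| < ε)
    (HP2 : ∀ ε : ℝ, 0 < ε → ∃ N : ℕ, ∀ n : ℕ, N ≤ n → ∀ y : Fin n,
      (T n : ℝ) * pi n y < ε)
    (HP3 : ∀ M : ℝ, ∃ N : ℕ, ∀ n : ℕ, N ≤ n → ∀ y : Fin n,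
      M < (n : ℝ) ^ 2 * pi n y)
    :
    ∀ ε : ℝ, 0 < ε → ∃ N : ℕ, ∀ n : ℕ, N ≤ n → ∀ t : ℕ,
      (1 - ε) * noHit (P n) (x n) (pi n) t ≤ noHit (P n) (x n) (pi n) (t + T n) := by
  intro ε hε
  obtain ⟨N₁, hN₁⟩ := HP1 1 one_pos
  obtain ⟨N₂, hN₂⟩ := HP2 (min (ε / 4) (1 / 8)) (by positivity)
  obtain ⟨N₃, hN₃⟩ := HP3 1
  refine ⟨max (max N₁ N₂) (max N₃ 2), fun n hn t => ?_⟩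
  simp only [max_le_iff] at hn
  obtain ⟨⟨hn₁, hn₂⟩, hn₃, hn⟩ := hn
  have hP : P n ∈ rowStochastic ℝ (Fin n) := mem_rowStochastic_iff_sum.2 ⟨hnn n hn, hrow n hn⟩
  have hmix : ∀ w, (P n ^ T n) w (x n) ≤ 2 * pi n (x n) := fun w => by
    have := lt_of_rpow_mul_lt_one_lt_sq_mul hc.le (abs_nonneg _) (hN₁ n hn₁ w (x n))
      (hN₃ n hn₃ (x n))
    linarith [le_abs_self ((P n ^ T n) w (x n) - pi n (x n))]
  have hTπ : (T n : ℝ) * pi n (x n) < min (ε / 4) (1 / 8) := hN₂ n hn₂ (x n)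
  have hwindow := noHit_sub_noHit_add_le hP (hpinn n hn) (hpisum n hn) (hpistat n hn) hmix
    (by linarith [min_le_right (ε / 4) (1 / 8)]) t
  have hε' : 4 * T n * pi n (x n) * noHit (P n) (x n) (pi n) t
      ≤ ε * noHit (P n) (x n) (pi n) t :=
    mul_le_mul_of_nonneg_right (by linarith [min_le_left (ε / 4) (1 / 8)])
      (noHit_nonneg (hnn n hn) (hpinn n hn) t)
  linarith

theorem slow_decay_over_mixing_window
    (P : (n : ℕ) → Matrix (Fin n) (Fin n) ℝ)
    (pi : (n : ℕ) → Fin n → ℝ)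
    (x : (n : ℕ) → Fin n)
    (T : ℕ → ℕ) (c : ℝ)
    (hc : 2 < c)
    (hT : Filter.Tendsto T Filter.atTop Filter.atTop)
    (hnn : ∀ n : ℕ, 2 ≤ n → ∀ y z : Fin n, 0 ≤ P n y z)
    (hrow : ∀ n : ℕ, 2 ≤ n → ∀ y : Fin n, ∑ z, P n y z = 1)
    (hirr : ∀ n : ℕ, 2 ≤ n → ∀ y z : Fin n, ∃ t : ℕ, 0 < (P n ^ t) y z)
    (hpinn : ∀ n : ℕ, 2 ≤ n → ∀ y : Fin n, 0 ≤ pi n y)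
    (hpisum : ∀ n : ℕ, 2 ≤ n → ∑ y, pi n y = 1)
    (hpistat : ∀ n : ℕ, 2 ≤ n → Matrix.vecMul (pi n) (P n) = pi n)
    (hpiuniq : ∀ n : ℕ, 2 ≤ n → ∀ rho : Fin n → ℝ, (∀ y, 0 ≤ rho y) →
      (∑ y, rho y = 1) → Matrix.vecMul rho (P n) = rho → rho = pi n)
    (hkirr : ∀ n : ℕ, 2 ≤ n → ∀ y z : Fin n, y ≠ x n → z ≠ x n →
      ∃ t : ℕ, 0 < ((killed (P n) (x n)) ^ t) y z)
    (HP1 : ∀ ε : ℝ, 0 < ε → ∃ N : ℕ, ∀ n : ℕ, N ≤ n → ∀ y z : Fin n,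
      (n : ℝ) ^ c * |(P n ^ T n) y z - pi n z| < ε)
    (HP2 : ∀ ε : ℝ, 0 < ε → ∃ N : ℕ, ∀ n : ℕ, N ≤ n → ∀ y : Fin n,
      (T n : ℝ) * pi n y < ε)
    (HP3 : ∀ M : ℝ, ∃ N : ℕ, ∀ n : ℕ, N ≤ n → ∀ y : Fin n,
      M < (n : ℝ) ^ 2 * pi n y)
    :
    ∀ ε : ℝ, 0 < ε → ∃ N : ℕ, ∀ n : ℕ, N ≤ n → ∀ t : ℕ,
      (1 - ε) * noHit (P n) (x n) (pi n) t ≤ noHit (P n) (x n) (pi n) (t + T n) :=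
  slow_decay_over_mixing_window_general P pi x T c hc hnn hrow hpinn hpisum hpistat HP1 HP2 HP3
end
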